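/- Let G be a subgroup of S_n and let f : S_n → M be any function into a commutative monoid (written additively) that is constant on conjugacy classes of S_n. Then r · Σ_{τ∈G} f(τ) = Σ_{σ∈S_n} χ^G(σ) f(σ), where r = [S_n : G] and χ^G(σ) is the number of left cosets of G fixed by σ. -/
import Mathlib


/-- For `G ≤ Sₙ` of index `r` and a class function `f : Sₙ → M` into a commutative
additive monoid: `r · Σ_{τ∈G} f(τ) = Σ_{σ∈Sₙ} χ^G(σ) · f(σ)`, where `χ^G(σ)` is
the number of left cosets of `G` fixed by `σ`. -/
theorem class_function_coset_identity (n : ℕ) (G : Subgroup (Equiv.Perm (Fin n)))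
    [Fintype G] (M : Type*) [AddCommMonoid M] (f : Equiv.Perm (Fin n) → M)
    (hf : ∀ σ u : Equiv.Perm (Fin n), f (u * σ * u⁻¹) = f σ) :
    G.index • ∑ τ : G, f (τ : Equiv.Perm (Fin n)) =
      ∑ σ : Equiv.Perm (Fin n),
        (Nat.card {c : Equiv.Perm (Fin n) ⧸ G // σ • c = c}) • f σ := by
  classical
  set Q := Equiv.Perm (Fin n) ⧸ G
  have hcard : ∀ σ : Equiv.Perm (Fin n),
      (Nat.card {c : Q // σ • c = c}) • f σ = ∑ c : Q, if σ • c = c then f σ else 0 := by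
    intro σ
    rw [← Finset.sum_filter, Finset.sum_const, Nat.card_eq_fintype_card,
      Fintype.card_subtype]
  rw [Finset.sum_congr rfl fun σ _ => hcard σ, Finset.sum_comm]
  have inner : ∀ c : Q, (∑ σ : Equiv.Perm (Fin n), if σ • c = c then f σ else 0)
      = ∑ τ : G, f (τ : Equiv.Perm (Fin n)) := by
    intro c
    obtain ⟨t, rfl⟩ := QuotientGroup.mk_surjective c
    have e : Equiv.Perm (Fin n) ≃ Equiv.Perm (Fin n) :=
      (Equiv.mulLeft t).trans (Equiv.mulRight t⁻¹)
    rw [← Equiv.sum_comp ((Equiv.mulLeft t).trans (Equiv.mulRight t⁻¹))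
      (fun σ => if σ • (QuotientGroup.mk t : Q) = QuotientGroup.mk t then f σ else 0)]
    have hcond : ∀ τ : Equiv.Perm (Fin n),
        ((t * τ * t⁻¹) • (QuotientGroup.mk t : Q) = QuotientGroup.mk t) ↔ τ ∈ G := by
      intro τ
      rw [MulAction.Quotient.smul_mk, QuotientGroup.eq]
      constructor
      · intro h
        have := h
        simpa [mul_assoc, smul_eq_mul] using this
      · intro h
        simpa [mul_assoc, smul_eq_mul] using h
    calc (∑ τ : Equiv.Perm (Fin n),
            if ((Equiv.mulLeft t).trans (Equiv.mulRight t⁻¹)) τ • (QuotientGroup.mk t : Q)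
              = QuotientGroup.mk t
            then f (((Equiv.mulLeft t).trans (Equiv.mulRight t⁻¹)) τ) else 0)
        = ∑ τ : Equiv.Perm (Fin n), if τ ∈ G then f τ else 0 := by
          refine Finset.sum_congr rfl fun τ _ => ?_
          have h1 : ((Equiv.mulLeft t).trans (Equiv.mulRight t⁻¹)) τ = t * τ * t⁻¹ := rfl
          rw [h1, hf τ t]
          simp only [hcond τ]
      _ = ∑ τ : G, f (τ : Equiv.Perm (Fin n)) := by
          rw [← Finset.sum_filter, ← Finset.sum_subtype (Finset.univ.filter (· ∈ G))
            (fun τ => by simp) f]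
  rw [Finset.sum_congr rfl fun c _ => inner c, Finset.sum_const, Subgroup.index,
    Nat.card_eq_fintype_card]
  rfl
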